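/- For g(y) = e^{−y²/2} y^{2m+1} − 2m·e^{−y²/2} y^{2m−1} (m ≥ 0, with the second term absent when m = 0), the function x ↦ (1/2)∫_ℝ g(y) sgn(y−x) dy equals x^{2m} e^{−x²/2}. -/

import Mathlib

/-!
With `F y = y ^ (2m) * exp (-y²/2)` one has `F' = -g`, and `F` vanishes at `±∞`. Splitting the
integral at `x`, the fundamental theorem of calculus on `(-∞, x]` and on `(x, ∞)` gives `F x` for
each half, so `(1/2) ∫ g(y) sgn(y - x) dy = F x`.
-/

open MeasureTheory Real Filter Set Topology

theorem integral_mul_sign_sub_of_hasDerivAt {g F : ℝ → ℝ} (hF : ∀ y, HasDerivAt F (-g y) y)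
    (hg : Integrable g) (hbot : Tendsto F atBot (𝓝 0)) (htop : Tendsto F atTop (𝓝 0))
    (x : ℝ) : ∫ y, g y * Real.sign (y - x) = 2 * F x := by
  have hleft : EqOn (fun y => g y * Real.sign (y - x)) (fun y => -g y) (Iio x) := fun y hy => by
    simp [Real.sign_of_neg (sub_neg.2 hy)]
  have hright : EqOn (fun y => g y * Real.sign (y - x)) g (Ioi x) := fun y hy => by
    simp [Real.sign_of_pos (sub_pos.2 hy)]
  have hint_left : ∫ y in Iic x, -g y = F x := by
    simpa using integral_Iic_of_hasDerivAt_of_tendsto' (fun y _ => hF y) hg.neg.integrableOn hbot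
  have hint_right : ∫ y in Ioi x, g y = F x := by
    have h := integral_Ioi_of_hasDerivAt_of_tendsto' (a := x) (fun y _ => hF y)
      hg.neg.integrableOn htop
    rw [integral_neg] at h
    linarith
  calc ∫ y, g y * Real.sign (y - x)
      = (∫ y in Iio x, g y * Real.sign (y - x)) + ∫ y in Ioi x, g y * Real.sign (y - x) := by
        rw [← integral_Iic_eq_integral_Iio]
        exact (intervalIntegral.integral_Iic_add_Ioi
          ((integrableOn_Iic_iff_integrableOn_Iio).2
            (hg.neg.integrableOn.congr_fun hleft.symm measurableSet_Iio))
          (hg.integrableOn.congr_fun hright.symm measurableSet_Ioi)).symm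
    _ = (∫ y in Iic x, -g y) + ∫ y in Ioi x, g y := by
        rw [setIntegral_congr_fun measurableSet_Iio hleft, ← integral_Iic_eq_integral_Iio,
          setIntegral_congr_fun measurableSet_Ioi hright]
    _ = 2 * F x := by rw [hint_left, hint_right]; ring

theorem hasDerivAt_pow_mul_exp_neg_sq_div_two (n : ℕ) (y : ℝ) :
    HasDerivAt (fun y => y ^ n * exp (-y ^ 2 / 2))
      (n * y ^ (n - 1) * exp (-y ^ 2 / 2) - y ^ (n + 1) * exp (-y ^ 2 / 2)) y := by
  have hexp : HasDerivAt (fun y : ℝ => exp (-y ^ 2 / 2)) (exp (-y ^ 2 / 2) * -y) y :=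
    ((hasDerivAt_pow 2 y).fun_neg.div_const 2).exp.congr_deriv (by ring)
  exact ((hasDerivAt_pow n y).mul hexp).congr_deriv (by ring)

theorem integrable_pow_mul_exp_neg_sq_div_two (n : ℕ) :
    Integrable fun y : ℝ => y ^ n * exp (-y ^ 2 / 2) := by
  convert integrable_rpow_mul_exp_neg_mul_sq (b := 1 / 2) (by norm_num) (s := n)
    (by linarith [n.cast_nonneg (α := ℝ)]) using 2 with y
  rw [rpow_natCast, neg_mul, neg_div, one_div_mul_eq_div]

theorem tendsto_pow_two_mul_mul_exp_neg_sq_div_two_cocompact (m : ℕ) :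
    Tendsto (fun y : ℝ => y ^ (2 * m) * exp (-y ^ 2 / 2)) (cocompact ℝ) (𝓝 0) := by
  convert tendsto_rpow_abs_mul_exp_neg_mul_sq_cocompact (a := 1 / 2) (by norm_num) (2 * m)
    using 2 with y
  rw [show (2 * m : ℝ) = (2 * m : ℕ) by push_cast; rfl, rpow_natCast, pow_mul, pow_mul, sq_abs,
    neg_mul, neg_div, one_div_mul_eq_div]

theorem eps_odd_moment (m : ℕ) (x : ℝ) :
    (1 / 2) * ∫ y : ℝ,
        (Real.exp (-y ^ 2 / 2) * y ^ (2 * m + 1)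
          - (2 * m : ℝ) * Real.exp (-y ^ 2 / 2) * y ^ (2 * m - 1)) * Real.sign (y - x)
      = x ^ (2 * m) * Real.exp (-x ^ 2 / 2) := by
  have hF : ∀ y : ℝ, HasDerivAt (fun y => y ^ (2 * m) * exp (-y ^ 2 / 2))
      (-(exp (-y ^ 2 / 2) * y ^ (2 * m + 1)
          - (2 * m : ℝ) * exp (-y ^ 2 / 2) * y ^ (2 * m - 1))) y := fun y =>
    (hasDerivAt_pow_mul_exp_neg_sq_div_two (2 * m) y).congr_deriv (by push_cast; ring)
  have hg : Integrable fun y : ℝ => exp (-y ^ 2 / 2) * y ^ (2 * m + 1)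
      - (2 * m : ℝ) * exp (-y ^ 2 / 2) * y ^ (2 * m - 1) :=
    ((integrable_pow_mul_exp_neg_sq_div_two (2 * m + 1)).sub
      ((integrable_pow_mul_exp_neg_sq_div_two (2 * m - 1)).const_mul (2 * m))).congr
      (ae_of_all _ fun y => by simp only [Pi.sub_apply]; ring)
  have hdecay := tendsto_pow_two_mul_mul_exp_neg_sq_div_two_cocompact m
  rw [integral_mul_sign_sub_of_hasDerivAt hF hg (hdecay.mono_left atBot_le_cocompact)
    (hdecay.mono_left atTop_le_cocompact)]
  ring
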